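/- Let φ be a nonconstant solution of the stationary Adkins–Nappi equation with boundary values φ(0)=0, φ(∞)=nπ for an integer n ≥ 1, whose associated quantity W(r) = r⁴φ'(r)² − 2r² sin²φ − (φ − sin φ cos φ)² satisfies W(0)=0 and W(∞)=−n²π². Then 0 < φ(r) < nπ for all r > 0. -/

import Mathlib

open Real Set

/-- The monotone quantity `W(r) = r⁴ φ'(r)² − 2r² sin²φ(r) − (φ(r) − sin φ(r) cos φ(r))²`. -/
noncomputable def Wfun (φ φ' : ℝ → ℝ) (r : ℝ) : ℝ :=
  r^4 * (φ' r)^2 - 2 * r^2 * Real.sin (φ r)^2 -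
    (φ r - Real.sin (φ r) * Real.cos (φ r))^2

/-!
Since `W' = -4 r sin²φ ≤ 0`, the boundary values give `-n²π² ≤ W ≤ 0` on `(0, ∞)`.
If `φ` exceeded `nπ`, it would have an interior maximum `r` above `nπ`; there `φ' = 0`, so
`W(r) ≤ -(φ - sin φ cos φ)² < -n²π²`. At a zero `r` of `φ` we have `W(r) = r⁴ φ'(r)² ≤ 0`, so
`φ'(r) = 0`. Touching `0` or `nπ` thus produces a point where `(φ, φ') = (mπ, 0)`, an
equilibrium of the equation; Grönwall's inequality for `(φ - mπ, φ')` then forces `φ ≡ mπ`,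
contradicting the boundary values.
-/

open Filter Topology

lemma abs_sin_le_abs_sub_int_mul_pi (x : ℝ) (m : ℤ) : |sin x| ≤ |x - m * π| := by
  calc |sin x| = |sin (x - m * π)| := by simp [sin_sub_int_mul_pi, abs_mul]
    _ ≤ |x - m * π| := abs_sin_le_abs

lemma int_mul_pi_lt_sub_sin_mul_cos {m : ℤ} {x : ℝ} (h : m * π < x) :
    m * π < x - sin x * cos x := by
  have hsin : sin (2 * x) = sin (2 * (x - m * π)) := by
    rw [mul_sub, ← sin_sub_int_mul_two_pi (2 * x) m]; ring_nf
  have hlt : sin (2 * (x - m * π)) < 2 * (x - m * π) := sin_lt (by linarith)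
  linarith [sin_two_mul x]

lemma abs_stationary_rhs_le (m : ℤ) {a x p q : ℝ} (ha : 0 < a) (hx : a ≤ x) :
    |sin (2 * p) / x ^ 2 + (p - sin p * cos p) * (1 - cos (2 * p)) / x ^ 4 - 2 / x * q| ≤
      (2 / a + 2 / a ^ 2 + 2 * (|m * π| + 2) / a ^ 4) * max |p - m * π| |q| := by
  set N := max |p - m * π| |q|
  have hψ : |p - m * π| ≤ N := le_max_left _ _
  have hq : |q| ≤ N := le_max_right _ _
  have hs : |sin p| ≤ |p - m * π| := abs_sin_le_abs_sub_int_mul_pi p m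
  have hs1 : |sin p| ≤ 1 := abs_sin_le_one p
  have hc1 : |cos p| ≤ 1 := abs_cos_le_one p
  have hsc : |sin p * cos p| ≤ 1 := by
    rw [abs_mul]; nlinarith [abs_nonneg (sin p), abs_nonneg (cos p)]
  have hsq : sin p ^ 2 ≤ |sin p| := by
    rw [← sq_abs]; nlinarith [abs_nonneg (sin p)]
  have hsin2 : |sin (2 * p)| ≤ 2 * N := by
    rw [sin_two_mul, abs_mul, abs_mul, abs_two]
    nlinarith [abs_nonneg (sin p), abs_nonneg (cos p)]
  have hcos2 : 1 - cos (2 * p) = 2 * sin p ^ 2 := by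
    rw [cos_two_mul']; linarith [sin_sq_add_cos_sq p]
  have hprod : |(p - sin p * cos p) * (1 - cos (2 * p))| ≤ 2 * (|m * π| + 2) * N := by
    have hg : |p - sin p * cos p| ≤ |m * π| + |p - m * π| + 1 := by
      calc |p - sin p * cos p| = |m * π + (p - m * π) - sin p * cos p| := by ring_nf
        _ ≤ |m * π + (p - m * π)| + |sin p * cos p| := abs_sub _ _
        _ ≤ _ := by linarith [abs_add_le (m * π) (p - m * π)]
    rw [hcos2, abs_mul, abs_of_nonneg (by positivity : 0 ≤ 2 * sin p ^ 2)]
    nlinarith [abs_nonneg (m * π), abs_nonneg (p - m * π), sq_nonneg (sin p),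
      mul_le_mul_of_nonneg_left hsq (abs_nonneg (p - m * π))]
  have hx0 : 0 < x := ha.trans_le hx
  calc _ ≤ |sin (2 * p) / x ^ 2| + |(p - sin p * cos p) * (1 - cos (2 * p)) / x ^ 4|
          + |2 / x * q| := (abs_sub _ _).trans (add_le_add_left (abs_add_le _ _) _)
    _ = |sin (2 * p)| / x ^ 2 + |(p - sin p * cos p) * (1 - cos (2 * p))| / x ^ 4
          + 2 / x * |q| := by simp only [abs_div, abs_mul, abs_pow, abs_of_pos hx0, abs_two]
    _ ≤ 2 * N / a ^ 2 + 2 * (|m * π| + 2) * N / a ^ 4 + 2 / a * N := by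
        gcongr
    _ = _ := by ring

lemma eqOn_zero_of_norm_deriv_le_mul_norm {E : Type*} [NormedAddCommGroup E] [NormedSpace ℝ E]
    {f f' : ℝ → E} {K a b t₀ : ℝ} (hf : ∀ t ∈ Icc a b, HasDerivAt f (f' t) t)
    (bound : ∀ t ∈ Icc a b, ‖f' t‖ ≤ K * ‖f t‖) (ht₀ : t₀ ∈ Icc a b) (h₀ : f t₀ = 0) :
    EqOn f 0 (Icc a b) := by
  intro t ht
  rcases le_total t₀ t with h | h
  · exact eq_zero_of_abs_deriv_le_mul_abs_self_of_eq_zero_right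
      (fun s hs => (hf s ⟨ht₀.1.trans hs.1, hs.2.trans ht.2⟩).continuousAt.continuousWithinAt)
      (fun s hs => (hf s ⟨ht₀.1.trans hs.1, hs.2.le.trans ht.2⟩).hasDerivWithinAt) h₀
      (fun s hs => bound s ⟨ht₀.1.trans hs.1, hs.2.le.trans ht.2⟩) t ⟨h, le_rfl⟩
  · -- run the forward argument for `s ↦ f (-s)` on `[-t₀, -t]`
    have hmem : ∀ s ∈ Icc (-t₀) (-t), -s ∈ Icc a b := fun s hs =>
      ⟨by linarith [ht.1, hs.2], by linarith [ht₀.2, hs.1]⟩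
    have hg : ∀ s ∈ Icc (-t₀) (-t), HasDerivAt (fun s => f (-s)) (-f' (-s)) s := fun s hs => by
      simpa [Function.comp_def] using (hf (-s) (hmem s hs)).scomp s (hasDerivAt_neg s)
    simpa using eq_zero_of_abs_deriv_le_mul_abs_self_of_eq_zero_right
      (fun s hs => (hg s hs).continuousAt.continuousWithinAt)
      (fun s hs => (hg s (Ico_subset_Icc_self hs)).hasDerivWithinAt) (by simpa using h₀)
      (fun s hs => by simpa using bound (-s) (hmem s (Ico_subset_Icc_self hs))) (-t)
      ⟨neg_le_neg h, le_rfl⟩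

lemma AntitoneOn.le_of_tendsto_nhdsGT {f : ℝ → ℝ} {a L r : ℝ} (hf : AntitoneOn f (Ioi a))
    (h : Tendsto f (𝓝[>] a) (𝓝 L)) (hr : a < r) : f r ≤ L :=
  ge_of_tendsto h <| mem_of_superset (Ioo_mem_nhdsGT hr) fun _ hx => hf hx.1 hr hx.2.le

lemma AntitoneOn.ge_of_tendsto_atTop {f : ℝ → ℝ} {a L r : ℝ} (hf : AntitoneOn f (Ioi a))
    (h : Tendsto f atTop (𝓝 L)) (hr : a < r) : L ≤ f r :=
  le_of_tendsto h <| (eventually_ge_atTop r).mono fun _ hx => hf hr (hr.trans_le hx) hx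

lemma exists_isLocalMax_ge_of_tendsto {f : ℝ → ℝ} {a L₀ L r₀ : ℝ} (hf : ContinuousOn f (Ioi a))
    (h₀ : Tendsto f (𝓝[>] a) (𝓝 L₀)) (hinf : Tendsto f atTop (𝓝 L)) (hr₀ : a < r₀)
    (hL₀ : L₀ < f r₀) (hL : L < f r₀) : ∃ r > a, IsLocalMax f r ∧ f r₀ ≤ f r := by
  obtain ⟨s, ⟨hs, hsa, hsr₀⟩⟩ :=
    ((h₀.eventually (gt_mem_nhds hL₀)).and (Ioo_mem_nhdsGT hr₀)).exists
  obtain ⟨t, ht, htr₀⟩ :=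
    ((hinf.eventually (gt_mem_nhds hL)).and (eventually_gt_atTop r₀)).exists
  obtain ⟨r, hr, hmax⟩ := isCompact_Icc.exists_isMaxOn
    (nonempty_Icc.2 (hsr₀.le.trans htr₀.le)) (hf.mono fun x hx => hsa.trans_le hx.1)
  have hr₀r : f r₀ ≤ f r := hmax ⟨hsr₀.le, htr₀.le⟩
  have hrs : s < r := hr.1.lt_of_ne (by rintro rfl; linarith)
  have hrt : r < t := hr.2.lt_of_ne (by rintro rfl; linarith)
  exact ⟨r, hsa.trans hrs, hmax.isLocalMax (Icc_mem_nhds hrs hrt), hr₀r⟩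

structure IsStationarySolution (φ φ' φ'' : ℝ → ℝ) : Prop where
  hasDerivAt : ∀ r ∈ Ioi (0 : ℝ), HasDerivAt φ (φ' r) r
  hasDerivAt_deriv : ∀ r ∈ Ioi (0 : ℝ), HasDerivAt φ' (φ'' r) r
  ode : ∀ r ∈ Ioi (0 : ℝ), φ'' r + (2 / r) * φ' r =
    sin (2 * φ r) / r ^ 2 + (φ r - sin (φ r) * cos (φ r)) * (1 - cos (2 * φ r)) / r ^ 4

namespace IsStationarySolution

variable {φ φ' φ'' : ℝ → ℝ}

lemma continuousOn (hφ : IsStationarySolution φ φ' φ'') : ContinuousOn φ (Ioi 0) :=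
  fun r hr => (hφ.hasDerivAt r hr).continuousAt.continuousWithinAt

lemma hasDerivAt_Wfun (hφ : IsStationarySolution φ φ' φ'') {r : ℝ} (hr : 0 < r) :
    HasDerivAt (Wfun φ φ') (-4 * r * sin (φ r) ^ 2) r := by
  have h1 := hφ.hasDerivAt r hr
  have H := (((hasDerivAt_pow 4 r).mul ((hφ.hasDerivAt_deriv r hr).pow 2)).sub
      (((hasDerivAt_pow 2 r).const_mul 2).mul (h1.sin.pow 2))).sub
      ((h1.sub (h1.sin.mul h1.cos)).pow 2)
  refine H.congr_deriv ?_
  simp only [Pi.pow_apply, Pi.mul_apply, Pi.sub_apply]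
  rw [eq_sub_of_add_eq (hφ.ode r hr), sin_two_mul, cos_two_mul']
  field_simp
  ring

lemma antitoneOn_Wfun (hφ : IsStationarySolution φ φ' φ'') : AntitoneOn (Wfun φ φ') (Ioi 0) := by
  have hW := fun r (hr : r ∈ Ioi (0 : ℝ)) => hφ.hasDerivAt_Wfun hr
  refine antitoneOn_of_hasDerivWithinAt_nonpos (convex_Ioi 0)
    (fun r hr => (hW r hr).continuousAt.continuousWithinAt)
    (fun r hr => (hW r (interior_subset hr)).hasDerivWithinAt) fun r hr => ?_
  have : (0 : ℝ) < r := interior_subset hr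
  nlinarith [sq_nonneg (sin (φ r))]

lemma norm_deriv_le (hφ : IsStationarySolution φ φ' φ'') (m : ℤ) {a t : ℝ} (ha : 0 < a)
    (ht : a ≤ t) :
    ‖(φ' t, φ'' t)‖ ≤
      (1 + (2 / a + 2 / a ^ 2 + 2 * (|m * π| + 2) / a ^ 4)) * ‖(φ t - m * π, φ' t)‖ := by
  have hrhs := abs_stationary_rhs_le m (p := φ t) (q := φ' t) ha ht
  rw [← eq_sub_of_add_eq (hφ.ode t (ha.trans_le ht))] at hrhs
  have hC : 0 ≤ 2 / a + 2 / a ^ 2 + 2 * (|m * π| + 2) / a ^ 4 := by positivity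
  simp only [Prod.norm_def, Real.norm_eq_abs] at hrhs ⊢
  refine max_le ?_ (hrhs.trans ?_) <;>
    nlinarith [le_max_right |φ t - m * π| |φ' t|, abs_nonneg (φ' t)]

lemma eq_int_mul_pi_of_deriv_eq_zero (hφ : IsStationarySolution φ φ' φ'') (m : ℤ) {r₀ x : ℝ}
    (hr₀ : 0 < r₀) (h : φ r₀ = m * π) (h' : φ' r₀ = 0) (hx : 0 < x) : φ x = m * π := by
  have ha : 0 < min x r₀ := lt_min hx hr₀
  have hmem : ∀ t ∈ Icc (min x r₀) (max x r₀), 0 < t := fun t ht => ha.trans_le ht.1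
  have hzero := eqOn_zero_of_norm_deriv_le_mul_norm (f := fun t => (φ t - m * π, φ' t))
    (fun t ht => ((hφ.hasDerivAt t (hmem t ht)).sub_const _).prodMk
      (hφ.hasDerivAt_deriv t (hmem t ht)))
    (fun t ht => hφ.norm_deriv_le m ha ht.1) ⟨min_le_right _ _, le_max_right _ _⟩
    (by simp [h, h']) ⟨min_le_left _ _, le_max_left _ _⟩
  simpa [sub_eq_zero] using congrArg Prod.fst hzero

lemma le_nat_mul_pi (hφ : IsStationarySolution φ φ' φ'') {n : ℕ}
    (h₀ : Tendsto φ (𝓝[>] 0) (𝓝 0)) (hinf : Tendsto φ atTop (𝓝 (n * π)))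
    (hW : ∀ r > 0, -((n : ℝ) ^ 2 * π ^ 2) ≤ Wfun φ φ' r) {r : ℝ} (hr : 0 < r) : φ r ≤ n * π := by
  by_contra! hlt
  have hnπ : 0 ≤ (n : ℝ) * π := by positivity
  obtain ⟨s, hs, hmax, hrs⟩ :=
    exists_isLocalMax_ge_of_tendsto hφ.continuousOn h₀ hinf hr (hnπ.trans_lt hlt) hlt
  have hcrit : φ' s = 0 := hmax.hasDerivAt_eq_zero (hφ.hasDerivAt s hs)
  have hgt : (n : ℝ) * π < φ s - sin (φ s) * cos (φ s) := by
    exact_mod_cast int_mul_pi_lt_sub_sin_mul_cos (m := n) (by exact_mod_cast hlt.trans_le hrs)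
  have hWs := hW s hs
  simp only [Wfun, hcrit] at hWs
  nlinarith [mul_self_lt_mul_self hnπ hgt, sq_nonneg (s * sin (φ s))]

lemma pos_of_tendsto_atTop (hφ : IsStationarySolution φ φ' φ'') {L : ℝ} (hL : 0 < L)
    (hinf : Tendsto φ atTop (𝓝 L)) (hW : ∀ r > 0, Wfun φ φ' r ≤ 0) {r : ℝ} (hr : 0 < r) :
    0 < φ r := by
  by_contra! hle
  obtain ⟨R, hR, hrR⟩ := ((hinf.eventually (lt_mem_nhds hL)).and (eventually_ge_atTop r)).exists
  obtain ⟨r₀, hr₀, hzero⟩ := intermediate_value_Icc hrR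
    (hφ.continuousOn.mono fun x hx => hr.trans_le hx.1) ⟨hle, hR.le⟩
  have hr₀0 : 0 < r₀ := hr.trans_le hr₀.1
  have hcrit : φ' r₀ = 0 := by
    have hWr₀ := hW r₀ hr₀0
    simp only [Wfun, hzero, sin_zero, ne_eq, OfNat.ofNat_ne_zero, not_false_eq_true, zero_pow,
      mul_zero, sub_zero, cos_zero, mul_one, sub_self] at hWr₀
    exact pow_eq_zero_iff two_ne_zero |>.1 <| le_antisymm
      (nonpos_of_mul_nonpos_right hWr₀ (by positivity)) (sq_nonneg _)
  have hconst : ∀ x > 0, φ x = 0 := fun x hx => by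
    simpa using hφ.eq_int_mul_pi_of_deriv_eq_zero 0 hr₀0 (by simpa using hzero) hcrit hx
  have : Tendsto φ atTop (𝓝 0) := tendsto_const_nhds.congr'
    (mem_of_superset (Ioi_mem_atTop 0) fun x hx => (hconst x hx).symm)
  exact hL.ne' (tendsto_nhds_unique hinf this)

lemma lt_int_mul_pi (hφ : IsStationarySolution φ φ' φ'') (m : ℤ) {L₀ : ℝ}
    (h₀ : Tendsto φ (𝓝[>] 0) (𝓝 L₀)) (hL₀ : L₀ ≠ m * π) (hle : ∀ r > 0, φ r ≤ m * π) {r : ℝ}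
    (hr : 0 < r) : φ r < m * π := by
  refine (hle r hr).lt_of_ne fun heq => hL₀ (tendsto_nhds_unique h₀ ?_)
  have hmax : IsLocalMax φ r :=
    mem_of_superset (Ioi_mem_nhds hr) fun x hx => heq ▸ hle x hx
  have hconst : ∀ x > 0, φ x = m * π := fun x =>
    hφ.eq_int_mul_pi_of_deriv_eq_zero m hr heq (hmax.hasDerivAt_eq_zero (hφ.hasDerivAt r hr))
  exact tendsto_const_nhds.congr'
    (mem_of_superset self_mem_nhdsWithin fun x hx => (hconst x hx).symm)

end IsStationarySolution

theorem stmt5_general (φ φ' φ'' : ℝ → ℝ) (n : ℕ) (hn : 1 ≤ n)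
    (hd1 : ∀ r ∈ Set.Ioi (0:ℝ), HasDerivAt φ (φ' r) r)
    (hd2 : ∀ r ∈ Set.Ioi (0:ℝ), HasDerivAt φ' (φ'' r) r)
    (heq : ∀ r ∈ Set.Ioi (0:ℝ),
      φ'' r + (2/r) * φ' r =
        Real.sin (2 * φ r) / r^2 +
          (φ r - Real.sin (φ r) * Real.cos (φ r)) * (1 - Real.cos (2 * φ r)) / r^4)
    (h0 : Filter.Tendsto φ (nhdsWithin 0 (Set.Ioi 0)) (nhds 0))
    (hinf : Filter.Tendsto φ Filter.atTop (nhds ((n : ℝ) * Real.pi)))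
    (hW0 : Filter.Tendsto (Wfun φ φ') (nhdsWithin 0 (Set.Ioi 0)) (nhds 0))
    (hWinf : Filter.Tendsto (Wfun φ φ') Filter.atTop
      (nhds (-((n : ℝ)^2 * Real.pi^2)))) :
    ∀ r > 0, 0 < φ r ∧ φ r < (n : ℝ) * Real.pi := by
  have hφ : IsStationarySolution φ φ' φ'' := ⟨hd1, hd2, heq⟩
  have hnπ : 0 < (n : ℝ) * π := by positivity
  have hW := hφ.antitoneOn_Wfun
  have hle : ∀ r > 0, φ r ≤ n * π := fun r =>
    hφ.le_nat_mul_pi h0 hinf fun s => hW.ge_of_tendsto_atTop hWinf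
  intro r hr
  exact ⟨hφ.pos_of_tendsto_atTop hnπ hinf (fun s => hW.le_of_tendsto_nhdsGT hW0) hr,
    by exact_mod_cast hφ.lt_int_mul_pi n h0 (by exact_mod_cast hnπ.ne) (by exact_mod_cast hle) hr⟩

theorem stmt5 (φ φ' φ'' : ℝ → ℝ) (n : ℕ) (hn : 1 ≤ n)
    (hd1 : ∀ r ∈ Set.Ioi (0:ℝ), HasDerivAt φ (φ' r) r)
    (hd2 : ∀ r ∈ Set.Ioi (0:ℝ), HasDerivAt φ' (φ'' r) r)
    (heq : ∀ r ∈ Set.Ioi (0:ℝ),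
      φ'' r + (2/r) * φ' r =
        Real.sin (2 * φ r) / r^2 +
          (φ r - Real.sin (φ r) * Real.cos (φ r)) * (1 - Real.cos (2 * φ r)) / r^4)
    (hnonconst : ∃ a b : ℝ, 0 < a ∧ 0 < b ∧ φ a ≠ φ b)
    (h0 : Filter.Tendsto φ (nhdsWithin 0 (Set.Ioi 0)) (nhds 0))
    (hinf : Filter.Tendsto φ Filter.atTop (nhds ((n : ℝ) * Real.pi)))
    (hW0 : Filter.Tendsto (Wfun φ φ') (nhdsWithin 0 (Set.Ioi 0)) (nhds 0))
    (hWinf : Filter.Tendsto (Wfun φ φ') Filter.atTop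
      (nhds (-((n : ℝ)^2 * Real.pi^2)))) :
    ∀ r > 0, 0 < φ r ∧ φ r < (n : ℝ) * Real.pi :=
  stmt5_general φ φ' φ'' n hn hd1 hd2 heq h0 hinf hW0 hWinf
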